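/- Let A = (uvᵀ) ∘ H where u, v are unit vectors in ℝ^K, H is a K×K real matrix with all entries bounded by 1 in absolute value, and ∘ denotes the entrywise (Hadamard) product. Let Σ be a positive semidefinite 2K×2K matrix with K×K blocks Σ₁₁, Σ₁₂, Σ₂₁, Σ₂₂, and set B = Σ^{1/2} M Σ^{1/2} where M is the 2K×2K matrix with zero diagonal blocks and off-diagonal blocks A and Aᵀ. Then tr(B²) ≤ 2‖Σ₁₂^{abs}‖_op² + 2‖Σ₁₁^{abs}‖_op ‖Σ₂₂^{abs}‖_op, where C^{abs} denotes the matrix of absolute values of entries of C. -/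

import Mathlib

/-!
Since `Σ^{1/2} Σ^{1/2} = Σ`, cycling the trace gives `tr(B²) = tr(ΣMΣM)`, and expanding the
blocks (with `Σ₂₁ = Σ₁₂ᵀ`) gives `2 tr(Σ₁₂Aᵀ Σ₁₂Aᵀ) + 2 tr(Σ₁₁A Σ₂₂Aᵀ)`. The entries of `A` are
dominated by those of the rank-one matrix `|u| |v|ᵀ`, so each of these traces is at most a
product of two bilinear forms `⟨x, Cᵃᵇˢ y⟩` with unit vectors `x, y ∈ {|u|, |v|}`, and each such
form is at most `‖Cᵃᵇˢ‖_op`.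
-/

open Matrix

/-- The spectral (ℓ²→ℓ²) operator norm of a square real matrix. -/
noncomputable def opNorm {n : Type*} [Fintype n] [DecidableEq n]
    (A : Matrix n n ℝ) : ℝ :=
  ‖Matrix.toEuclideanCLM (𝕜 := ℝ) A‖

/-- The square root of a positive semidefinite matrix, as defined in the older Mathlib
(`Matrix.PosSemidef.sqrt`, since removed). -/
noncomputable def Matrix.PosSemidef.sqrt {n 𝕜 : Type*} [Fintype n] [DecidableEq n] [RCLike 𝕜]
    [PartialOrder 𝕜] [StarOrderedRing 𝕜]
    {A : Matrix n n 𝕜} (hA : A.PosSemidef) : Matrix n n 𝕜 :=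
  hA.1.eigenvectorUnitary.1 * diagonal ((↑) ∘ (√·) ∘ hA.1.eigenvalues) *
    (star hA.1.eigenvectorUnitary : Matrix n n 𝕜)

namespace Matrix

variable {l m n o R : Type*}

theorem PosSemidef.sqrt_mul_self [Fintype n] [DecidableEq n] {A : Matrix n n ℝ}
    (hA : A.PosSemidef) : hA.sqrt * hA.sqrt = A := by
  have hU : (star hA.1.eigenvectorUnitary : Matrix n n ℝ) * hA.1.eigenvectorUnitary.1 = 1 :=
    Unitary.coe_star_mul_self _
  conv_rhs => rw [hA.1.spectral_theorem, Unitary.conjStarAlgAut_apply]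
  rw [PosSemidef.sqrt, show ∀ a b c d e f : Matrix n n ℝ,
    a * b * c * (d * e * f) = a * (b * (c * d) * e) * f by intros; noncomm_ring,
    hU, Matrix.mul_one, diagonal_mul_diagonal]
  congr 3
  funext i
  simp [Real.mul_self_sqrt (hA.eigenvalues_nonneg i)]

theorem trace_conj_mul_conj_of_mul_self_eq [Fintype n] [CommRing R] {S T M : Matrix n n R}
    (hT : T * T = S) : (T * M * T * (T * M * T)).trace = (S * M * S * M).trace :=
  calc (T * M * T * (T * M * T)).trace = (T * (M * S * M) * T).trace := by
        rw [← hT]; noncomm_ring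
    _ = (T * T * (M * S * M)).trace := trace_mul_cycle _ _ _
    _ = (S * M * S * M).trace := by rw [hT]; simp only [Matrix.mul_assoc]

theorem trace_fromBlocks [Fintype m] [Fintype n] [AddCommMonoid R] (A : Matrix m m R)
    (B : Matrix m n R) (C : Matrix n m R) (D : Matrix n n R) :
    (fromBlocks A B C D).trace = A.trace + D.trace := by
  simp [trace, Fintype.sum_sum_type]

theorem trace_fromBlocks_mul_antidiag_sq [Fintype m] [Fintype n] [CommRing R]
    (S₁₁ : Matrix m m R) (S₁₂ : Matrix m n R) (S₂₂ : Matrix n n R) (A : Matrix m n R) :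
    (fromBlocks S₁₁ S₁₂ S₁₂ᵀ S₂₂ * fromBlocks 0 A Aᵀ 0 * fromBlocks S₁₁ S₁₂ S₁₂ᵀ S₂₂ *
      fromBlocks 0 A Aᵀ 0).trace =
      2 * (S₁₂ * Aᵀ * S₁₂ * Aᵀ).trace + 2 * (S₁₁ * A * S₂₂ * Aᵀ).trace := by
  have h₁ : (S₁₂ᵀ * A * S₁₂ᵀ * A).trace = (S₁₂ * Aᵀ * S₁₂ * Aᵀ).trace := by
    rw [← trace_transpose]
    simp only [transpose_mul, transpose_transpose, Matrix.mul_assoc]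
    exact trace_mul_comm _ _ |>.trans (by simp only [Matrix.mul_assoc])
  have h₂ : (S₂₂ * Aᵀ * S₁₁ * A).trace = (S₁₁ * A * S₂₂ * Aᵀ).trace := by
    rw [Matrix.mul_assoc (S₂₂ * Aᵀ), trace_mul_comm, ← Matrix.mul_assoc]
  simp only [fromBlocks_multiply, Matrix.mul_zero, zero_add, add_zero, Matrix.add_mul,
    trace_fromBlocks, trace_add, h₁, h₂]
  ring

theorem abs_mul_apply_le_of_abs_le [Fintype m] (C : Matrix l m ℝ) {P : Matrix m n ℝ}
    {a : m → ℝ} {b : n → ℝ} (hP : ∀ i j, |P i j| ≤ a i * b j) (i : l) (j : n) :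
    |(C * P) i j| ≤ (C.map (fun x : ℝ => |x|) *ᵥ a) i * b j :=
  calc |(C * P) i j| ≤ ∑ k, |C i k| * |P k j| := by
        simpa only [mul_apply, abs_mul] using
          Finset.abs_sum_le_sum_abs (fun k => C i k * P k j) Finset.univ
    _ ≤ ∑ k, |C i k| * (a k * b j) := by gcongr with k; exact hP k j
    _ = (C.map (fun x : ℝ => |x|) *ᵥ a) i * b j := by
        simp only [mulVec, dotProduct, map_apply, Finset.sum_mul, mul_assoc]

theorem trace_mul_le_of_abs_le [Fintype m] [Fintype n] {P : Matrix m n ℝ} {Q : Matrix n m ℝ}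
    {a d : m → ℝ} {b c : n → ℝ} (hP : ∀ i j, |P i j| ≤ a i * b j)
    (hQ : ∀ j i, |Q j i| ≤ c j * d i) :
    (P * Q).trace ≤ (d ⬝ᵥ a) * (b ⬝ᵥ c) := by
  simp only [trace, diag, mul_apply, dotProduct, Finset.sum_mul_sum]
  refine Finset.sum_le_sum fun i _ => Finset.sum_le_sum fun j _ => ?_
  calc P i j * Q j i ≤ |P i j| * |Q j i| := by rw [← abs_mul]; exact le_abs_self _
    _ ≤ (a i * b j) * (c j * d i) :=
        mul_le_mul (hP i j) (hQ j i) (abs_nonneg _) ((abs_nonneg _).trans (hP i j))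
    _ = d i * a i * (b j * c j) := by ring

theorem trace_mul_mul_mul_le_of_abs_le [Fintype l] [Fintype m] [Fintype n] [Fintype o]
    (C : Matrix l m ℝ) (D : Matrix n o ℝ) {P : Matrix m n ℝ} {Q : Matrix o l ℝ} {a : m → ℝ}
    {b : n → ℝ} {c : o → ℝ} {d : l → ℝ}
    (hP : ∀ i j, |P i j| ≤ a i * b j) (hQ : ∀ i j, |Q i j| ≤ c i * d j) :
    (C * P * D * Q).trace ≤
      (d ⬝ᵥ (C.map (fun x : ℝ => |x|) *ᵥ a)) * (b ⬝ᵥ (D.map (fun x : ℝ => |x|) *ᵥ c)) := by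
  rw [Matrix.mul_assoc (C * P)]
  exact trace_mul_le_of_abs_le (abs_mul_apply_le_of_abs_le C hP) (abs_mul_apply_le_of_abs_le D hQ)

theorem abs_dotProduct_mulVec_le_opNorm [Fintype n] [DecidableEq n] (C : Matrix n n ℝ)
    (x y : n → ℝ) :
    |x ⬝ᵥ (C *ᵥ y)| ≤ opNorm C * ‖WithLp.toLp 2 x‖ * ‖WithLp.toLp 2 y‖ := by
  rw [← inner_toEuclideanCLM C (WithLp.toLp 2 x) (WithLp.toLp 2 y)]
  calc _ ≤ ‖WithLp.toLp 2 x‖ * ‖toEuclideanCLM (𝕜 := ℝ) C (WithLp.toLp 2 y)‖ :=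
        abs_real_inner_le_norm _ _
    _ ≤ ‖WithLp.toLp 2 x‖ * (opNorm C * ‖WithLp.toLp 2 y‖) := by
        gcongr; exact (toEuclideanCLM (n := n) (𝕜 := ℝ) C).le_opNorm _
    _ = _ := by ring

theorem trace_mul_mul_mul_le_opNorm [Fintype n] [DecidableEq n] (C D : Matrix n n ℝ)
    {P Q : Matrix n n ℝ} {a b c d : n → ℝ}
    (hP : ∀ i j, |P i j| ≤ a i * b j) (hQ : ∀ i j, |Q i j| ≤ c i * d j) :
    (C * P * D * Q).trace ≤ opNorm (C.map (fun x : ℝ => |x|)) * opNorm (D.map (fun x : ℝ => |x|)) *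
      (‖WithLp.toLp 2 a‖ * ‖WithLp.toLp 2 b‖ * ‖WithLp.toLp 2 c‖ * ‖WithLp.toLp 2 d‖) := by
  have hC := abs_dotProduct_mulVec_le_opNorm (C.map (fun x : ℝ => |x|)) d a
  have hD := abs_dotProduct_mulVec_le_opNorm (D.map (fun x : ℝ => |x|)) b c
  calc _ ≤ (d ⬝ᵥ (C.map (fun x : ℝ => |x|) *ᵥ a)) * (b ⬝ᵥ (D.map (fun x : ℝ => |x|) *ᵥ c)) :=
        trace_mul_mul_mul_le_of_abs_le C D hP hQ
    _ ≤ |d ⬝ᵥ (C.map (fun x : ℝ => |x|) *ᵥ a)| * |b ⬝ᵥ (D.map (fun x : ℝ => |x|) *ᵥ c)| := by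
        rw [← abs_mul]; exact le_abs_self _
    _ ≤ _ * _ := mul_le_mul hC hD (abs_nonneg _) ((abs_nonneg _).trans hC)
    _ = _ := by ring

end Matrix

theorem trace_sq_bound
    {K : ℕ} (u v : Fin K → ℝ) (hu : ∑ i, u i ^ 2 = 1) (hv : ∑ i, v i ^ 2 = 1)
    (H : Matrix (Fin K) (Fin K) ℝ) (hH : ∀ k l, |H k l| ≤ 1)
    (S11 S12 S21 S22 : Matrix (Fin K) (Fin K) ℝ)
    (hS : (Matrix.fromBlocks S11 S12 S21 S22).PosSemidef)
    (A : Matrix (Fin K) (Fin K) ℝ) (hA : A = Matrix.of fun i j => u i * v j * H i j)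
    (B : Matrix (Fin K ⊕ Fin K) (Fin K ⊕ Fin K) ℝ)
    (hB : B = hS.sqrt * Matrix.fromBlocks 0 A Aᵀ 0 * hS.sqrt) :
    (B * B).trace ≤
      2 * opNorm (S12.map (fun x : ℝ => |x|)) ^ 2 + 2 * opNorm (S11.map (fun x : ℝ => |x|)) * opNorm (S22.map (fun x : ℝ => |x|)) := by
  obtain rfl : S21 = S12ᵀ := by
    simpa using (isHermitian_fromBlocks_iff.mp hS.1).2.1.symm
  set x : Fin K → ℝ := fun i => |u i|
  set y : Fin K → ℝ := fun j => |v j|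
  have hx : ‖WithLp.toLp 2 x‖ = 1 := by simp [x, EuclideanSpace.norm_eq, hu]
  have hy : ‖WithLp.toLp 2 y‖ = 1 := by simp [y, EuclideanSpace.norm_eq, hv]
  have hAxy : ∀ i j, |A i j| ≤ x i * y j := fun i j => by
    simpa [hA, abs_mul] using mul_le_mul_of_nonneg_left (hH i j) (by positivity : 0 ≤ x i * y j)
  have hAyx : ∀ i j, |Aᵀ i j| ≤ y i * x j := fun i j => (hAxy j i).trans_eq (mul_comm _ _)
  have h₁₂ := trace_mul_mul_mul_le_opNorm S12 S12 hAyx hAyx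
  have h₁₁₂₂ := trace_mul_mul_mul_le_opNorm S11 S22 hAxy hAyx
  rw [hx, hy] at h₁₂ h₁₁₂₂
  rw [hB, trace_conj_mul_conj_of_mul_self_eq hS.sqrt_mul_self, trace_fromBlocks_mul_antidiag_sq]
  linarith
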